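/- arXiv:1701.04801 — 3 statements merged into one kernel-verified Lean document; each statement's English description precedes it below -/
import Mathlib

section
/- In the lattice with basis A, B and intersection matrix ((8, d), (d, 8)) with d ≥ 10, there is no element R with R² = -2 and A·R = 1. (Comparison of discriminants: the sublattice generated by A and R would have discriminant dividing that of the full lattice, leading to a contradiction.) -/
/-!
If `R = x • A + y • B`, the Gram determinant of `(A, R)` is `y²` times that of `(A, B)`.
For `R² = -2`, `A · R = R · A = 1` the former is `8 · (-2) - 1 = -17`, so `d² - 64` would
divide `17`, which is impossible for `d ≥ 10` since then `d² - 64 ≥ 36`.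
-/

def gramDet {R M : Type*} [CommRing R] [AddCommGroup M] [Module R M]
    (f : M →ₗ[R] M →ₗ[R] R) (u v : M) : R :=
  f u u * f v v - f u v * f v u

theorem gramDet_smul_add_smul {R M : Type*} [CommRing R] [AddCommGroup M] [Module R M]
    (f : M →ₗ[R] M →ₗ[R] R) (u v : M) (x y : R) :
    gramDet f u (x • u + y • v) = y ^ 2 * gramDet f u v := by
  simp only [gramDet, map_add, map_smul, LinearMap.add_apply, LinearMap.smul_apply, smul_eq_mul]
  ring

theorem stmt_2 {M : Type*} [AddCommGroup M] [Module ℤ M]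
    (f : M →ₗ[ℤ] M →ₗ[ℤ] ℤ) (A B : M) (d : ℤ) (hd : 10 ≤ d)
    (hAA : f A A = 8) (hAB : f A B = d) (hBA : f B A = d) (hBB : f B B = 8)
    (hbasis : ∀ R : M, ∃ x y : ℤ, R = x • A + y • B) :
    ¬ ∃ R : M, f R R = -2 ∧ f A R = 1 := by
  rintro ⟨R, hRR, hAR⟩
  obtain ⟨x, y, rfl⟩ := hbasis R
  have hRA : f (x • A + y • B) A = 1 := by
    rw [← hAR]
    simp only [map_add, map_zsmul, LinearMap.add_apply, LinearMap.smul_apply, hAA, hAB, hBA]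
  have hgram : gramDet f A (x • A + y • B) = y ^ 2 * gramDet f A B := by
    -- `hbasis` uses the `zsmul` action, not the `Module ℤ M` one for which `f` is linear
    rw [← int_smul_eq_zsmul ‹Module ℤ M›, ← int_smul_eq_zsmul ‹Module ℤ M›]
    exact gramDet_smul_add_smul f A B x y
  simp only [gramDet, hAA, hAB, hBA, hBB, hRR, hAR, hRA] at hgram
  have hdvd : d ^ 2 - 64 ∣ 17 := ⟨y ^ 2, by linarith⟩
  have hle : d ^ 2 - 64 ≤ 17 := Int.le_of_dvd (by norm_num) hdvd
  nlinarith
end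

section
/- For any integer d ≥ 10 there are no integers x, y satisfying simultaneously 8x + dy = 1 and 8x² + 2dxy + 8y² = -2. -/
/-!
Eliminating `x` (multiply the quadratic equation by 8 and substitute `8x = 1 - dy`) leaves
`(d² - 64) y² = 17`. For `d ≥ 10` the left side is `0` when `y = 0` and at least `36` otherwise.
The bound is sharp: for `d = 9` the pair `(x, y) = (-1, 1)` is a solution.
-/

theorem sub_sixtyFour_mul_sq_eq_seventeen {d x y : ℤ} (hlin : 8 * x + d * y = 1)
    (hquad : 8 * x ^ 2 + 2 * d * x * y + 8 * y ^ 2 = -2) : (d ^ 2 - 64) * y ^ 2 = 17 := by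
  linear_combination (-8) * hquad + (8 * x + d * y + 1) * hlin

theorem sub_sixtyFour_mul_sq_ne_seventeen {d : ℤ} (hd : 10 ≤ d) (y : ℤ) :
    (d ^ 2 - 64) * y ^ 2 ≠ 17 := by
  rcases eq_or_ne y 0 with rfl | hy
  · norm_num
  · have hy2 : 1 ≤ y ^ 2 := by have := sq_pos_of_ne_zero hy; omega
    have hd2 : 36 ≤ d ^ 2 - 64 := by nlinarith
    have : 36 ≤ (d ^ 2 - 64) * y ^ 2 := by nlinarith
    omega

theorem stmt_3 (d : ℤ) (hd : 10 ≤ d) :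
    ¬ ∃ x y : ℤ, 8 * x + d * y = 1 ∧ 8 * x ^ 2 + 2 * d * x * y + 8 * y ^ 2 = -2 := by
  rintro ⟨x, y, hlin, hquad⟩
  exact sub_sixtyFour_mul_sq_ne_seventeen hd y (sub_sixtyFour_mul_sq_eq_seventeen hlin hquad)
end

section
/- For any integer d ≥ 12 there are no integers x, y satisfying simultaneously 10x + dy = 1 and 10x² + 2dxy + 8y² = -2. -/
/-! Using `A·R = 1` to eliminate `d` gives `R² = 2 (x - a x² + b y²)` for the Gram matrix
`((2a, d), (d, 2b))`. When `a` is odd and `b` is even, `x - a x² ≡ x - x² ≡ 0` and `b y² ≡ 0`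
mod 2, so `R² ≡ 0 (mod 4)` and `R² = -2` is impossible, whatever `d` is. -/

theorem self_intersection_eq_of_dot_eq_one {a b d x y : ℤ} (hAR : 2 * a * x + d * y = 1) :
    2 * a * x ^ 2 + 2 * d * x * y + 2 * b * y ^ 2 = 2 * (x - a * x ^ 2 + b * y ^ 2) := by
  linear_combination 2 * x * hAR

theorem even_sub_mul_sq_add_mul_sq {a b : ℤ} (ha : Odd a) (hb : Even b) (x y : ℤ) :
    Even (x - a * x ^ 2 + b * y ^ 2) := by
  simp [Int.even_add, Int.even_sub, Int.even_mul, parity_simps, ha, hb]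

theorem self_intersection_ne_neg_two_of_dot_eq_one {a b : ℤ} (ha : Odd a) (hb : Even b)
    {d x y : ℤ} (hAR : 2 * a * x + d * y = 1) :
    2 * a * x ^ 2 + 2 * d * x * y + 2 * b * y ^ 2 ≠ -2 := by
  rw [self_intersection_eq_of_dot_eq_one hAR]
  intro hRR
  have hreduced : x - a * x ^ 2 + b * y ^ 2 = -1 := by omega
  have heven := even_sub_mul_sq_add_mul_sq ha hb x y
  rw [hreduced] at heven
  exact absurd heven (by decide)

theorem stmt_4_general (d : ℤ) :
    ¬ ∃ x y : ℤ, 10 * x + d * y = 1 ∧ 10 * x ^ 2 + 2 * d * x * y + 8 * y ^ 2 = -2 := by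
  rintro ⟨x, y, hAR, hRR⟩
  have hAR' : 2 * 5 * x + d * y = 1 := by linear_combination hAR
  exact self_intersection_ne_neg_two_of_dot_eq_one (b := 4) (by decide) (by decide) hAR'
    (by linear_combination hRR)

theorem stmt_4 (d : ℤ) (hd : 12 ≤ d) :
    ¬ ∃ x y : ℤ, 10 * x + d * y = 1 ∧ 10 * x ^ 2 + 2 * d * x * y + 8 * y ^ 2 = -2 :=
  stmt_4_general d
end
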